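/- Let ℒ be the linear span of the functions V ↦ ⟨E_I, V⟩² on G(d,k), where I ranges over k-subsets of {1,…,d} and E_I = Lin{e_i : i ∈ I} for a fixed orthonormal basis e₁,…,e_d of ℝ^d. Define T: ℒ → ℒ by (Tg)(U') = ∫_{G(d,k)} g(U) ⟨U, U'⟩² ν(dU). Then T is a bijective self-adjoint linear operator on ℒ (with respect to the inner product (f,g) = ∫ fg dν), and all eigenvalues of T are nonzero. -/

import Mathlib

/-!
Fix the `k`-vectors `E_I = ⋀_{i ∈ I} e_i`; by Cauchy–Binet they form an orthonormal basis, so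
`⟨U, U'⟩ = ∑_I ⟨E_I, U⟩ ⟨E_I, U'⟩`. The reflection in `e_jᗮ` preserves `ν` and every
`φ_I = ⟨E_I, ·⟩²`, and it changes the sign of `⟨E_I, ·⟩` exactly when `j ∈ I`. Hence
`∫ g ⟨E_I, ·⟩ ⟨E_J, ·⟩ dν = 0` for `g ∈ ℒ` and `I ≠ J`, and the kernel diagonalizes:
`T g = ∑_I (g, φ_I) φ_I`. Thus `(T f, g) = ∑_I (f, φ_I) (g, φ_I)` is symmetric, and `T g = 0`
forces `(g, φ_I) = 0` for all `I`, so `(g, g) = 0`. As `ν` is invariant under the transitive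
action of `O(d)` on frames it has full support, so the continuous `g` vanishes. An injective
endomorphism of the finite-dimensional `ℒ` is bijective.
-/

open scoped RealInnerProductSpace
open MeasureTheory

/-- The space `⋀_k ℝ^d` of `k`-vectors, in coordinates over `k`-subsets of `{1,…,d}`. -/
abbrev ExtPow (d k : ℕ) := EuclideanSpace ℝ {s : Finset (Fin d) // s.card = k}

/-- The simple `k`-vector `u₁ ∧ … ∧ u_k` in the coordinate model. -/
noncomputable def simpleWedge {d k : ℕ} (u : Fin k → EuclideanSpace ℝ (Fin d)) :
    ExtPow d k :=
  WithLp.toLp 2 (fun s : {s : Finset (Fin d) // s.card = k} =>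
    Matrix.det (Matrix.of fun i j : Fin k => u i (s.1.orderIsoOfFin s.2 j)))

/-- Orthonormal `k`-frames in `ℝ^d`, realizing the Grassmannian `G(d,k)` via spans;
functions on `G(d,k)` are realized as functions of frames (all functions considered
below depend only on the spanned subspace). -/
abbrev Stiefel (d k : ℕ) := {u : Fin k → EuclideanSpace ℝ (Fin d) // Orthonormal ℝ u}

open Matrix Finset Equiv

lemma Finset.exists_mem_notMem_of_ne_of_card_eq {α : Type*} {s t : Finset α} (hst : s ≠ t)
    (hcard : s.card = t.card) : ∃ x ∈ s, x ∉ t := by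
  by_contra! hsub
  exact hst (eq_of_subset_of_card_le hsub hcard.ge)

section CauchyBinet

variable {n : Type*} {k : ℕ}

lemma Matrix.det_mul_transpose_eq_sum_prod_mul_det {R : Type*} [CommRing R] [Fintype n]
    (A B : Matrix (Fin k) n R) :
    (A * Bᵀ).det = ∑ p : Fin k → n, (∏ i, A i (p i)) * (Bᵀ.submatrix p id).det := by
  have hrows : (A * Bᵀ : Matrix (Fin k) (Fin k) R) = fun i => ∑ x, A i x • fun j => B j x := by
    ext i j
    simp [mul_apply]
  rw [det, hrows]
  refine ((detRowAlternating : (Fin k → R) [⋀^Fin k]→ₗ[R] R).toMultilinearMap.map_sum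
    fun i x => A i x • fun j => B j x).trans (Finset.sum_congr rfl fun p _ => ?_)
  simp only [AlternatingMap.coe_multilinearMap, AlternatingMap.map_smul_univ]
  rfl

lemma Matrix.sum_perm_prod_mul_det_submatrix {R : Type*} [CommRing R] (A B : Matrix (Fin k) n R)
    (f : Fin k → n) :
    ∑ τ : Perm (Fin k), (∏ i, A i (f (τ i))) * (Bᵀ.submatrix (f ∘ τ) id).det =
      (A.submatrix id f).det * (B.submatrix id f).det := by
  have hperm : ∀ τ : Perm (Fin k), (Bᵀ.submatrix (f ∘ τ) id).det =
      Perm.sign τ * (B.submatrix id f).det := fun τ => by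
    rw [← det_transpose (B.submatrix id f), transpose_submatrix, ← det_permute]
    rfl
  rw [← det_transpose (A.submatrix id f), det_apply', Finset.sum_mul]
  refine Finset.sum_congr rfl fun τ _ => ?_
  simp only [hperm, transpose_apply, submatrix_apply, id]
  ring

variable [LinearOrder n]

lemma Function.Injective.exists_orderEmbOfFin_comp_eq {p : Fin k → n} (hp : p.Injective) :
    ∃ (s : {s : Finset n // s.card = k}) (τ : Perm (Fin k)), s.1.orderEmbOfFin s.2 ∘ τ = p := by
  classical
  have hcard : (univ.image p).card = k := by simp [card_image_of_injective _ hp]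
  refine ⟨⟨_, hcard⟩, (Tuple.sort p)⁻¹, ?_⟩
  have hsort : p ∘ Tuple.sort p = (univ.image p).orderEmbOfFin hcard :=
    orderEmbOfFin_unique hcard (fun i => by simp)
      ((Tuple.monotone_sort p).strictMono_of_injective (hp.comp (Tuple.sort p).injective))
  ext i
  simp [← hsort]

lemma orderEmbOfFin_comp_perm_injective :
    Function.Injective fun x : {s : Finset n // s.card = k} × Perm (Fin k) =>
      x.1.1.orderEmbOfFin x.1.2 ∘ x.2 := by
  rintro ⟨s, τ⟩ ⟨t, σ⟩ h
  have hst : s = t := Subtype.ext <| by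
    simpa [Set.range_comp, range_orderEmbOfFin] using congrArg Set.range h
  subst hst
  simp only [Prod.mk.injEq, true_and]
  exact Equiv.ext fun i => (s.1.orderEmbOfFin s.2).injective (congrFun h i)

/-- The Cauchy–Binet formula. -/
theorem Matrix.det_mul_transpose_eq_sum_det_mul_det {R : Type*} [CommRing R] [Fintype n]
    (A B : Matrix (Fin k) n R) :
    (A * Bᵀ).det = ∑ s : {s : Finset n // s.card = k},
      (A.submatrix id (s.1.orderEmbOfFin s.2)).det *
        (B.submatrix id (s.1.orderEmbOfFin s.2)).det := by
  classical
  have vanish : ∀ p ∉ Set.range fun x : {s : Finset n // s.card = k} × Perm (Fin k) =>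
      x.1.1.orderEmbOfFin x.1.2 ∘ x.2, (∏ i, A i (p i)) * (Bᵀ.submatrix p id).det = 0 := by
    intro p hp
    have hp' : ¬ p.Injective := fun hinj => hp <| by
      obtain ⟨s, τ, h⟩ := hinj.exists_orderEmbOfFin_comp_eq
      exact ⟨(s, τ), h⟩
    obtain ⟨i, j, hij, hne⟩ : ∃ i j, p i = p j ∧ i ≠ j := by
      simpa [Function.Injective] using hp'
    rw [det_zero_of_row_eq hne (by ext; simp [hij]), mul_zero]
  rw [det_mul_transpose_eq_sum_prod_mul_det, ← Fintype.sum_of_injective _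
    orderEmbOfFin_comp_perm_injective _ (fun p => (∏ i, A i (p i)) * (Bᵀ.submatrix p id).det)
    vanish (fun _ => rfl), Fintype.sum_prod_type]
  exact Finset.sum_congr rfl fun s _ =>
    sum_perm_prod_mul_det_submatrix A B (s.1.orderEmbOfFin s.2)

end CauchyBinet

section SimpleWedge

variable {d k : ℕ}

theorem inner_simpleWedge (u v : Fin k → EuclideanSpace ℝ (Fin d)) :
    ⟪simpleWedge u, simpleWedge v⟫ = (Matrix.of fun i j => ⟪u i, v j⟫).det := by
  have hgram : (Matrix.of fun i j => ⟪u i, v j⟫) =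
      (Matrix.of fun i x => u i x) * (Matrix.of fun j x => v j x)ᵀ := by
    ext i j
    simp [mul_apply, PiLp.inner_apply, mul_comm]
  rw [hgram, det_mul_transpose_eq_sum_det_mul_det, PiLp.inner_apply]
  refine Finset.sum_congr rfl fun s _ => ?_
  simp [simpleWedge, submatrix, Finset.coe_orderIsoOfFin_apply, mul_comm]

lemma simpleWedge_smul (c : Fin k → ℝ) (u : Fin k → EuclideanSpace ℝ (Fin d)) :
    simpleWedge (fun i => c i • u i) = (∏ i, c i) • simpleWedge u := by
  ext s
  simp [simpleWedge, ← det_mul_column]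

lemma inner_simpleWedge_comp_linearIsometryEquiv
    (ρ : EuclideanSpace ℝ (Fin d) ≃ₗᵢ[ℝ] EuclideanSpace ℝ (Fin d))
    (u v : Fin k → EuclideanSpace ℝ (Fin d)) :
    ⟪simpleWedge (ρ ∘ u), simpleWedge (ρ ∘ v)⟫ = ⟪simpleWedge u, simpleWedge v⟫ := by
  simp [inner_simpleWedge]

variable {e : Fin d → EuclideanSpace ℝ (Fin d)}

/-- `E_I = e_{i₁} ∧ … ∧ e_{i_k}`, where `i₁ < … < i_k` are the elements of `I`. -/
noncomputable def wedgeBasisVec (e : Fin d → EuclideanSpace ℝ (Fin d))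
    (s : {s : Finset (Fin d) // s.card = k}) : ExtPow d k :=
  simpleWedge fun t => e (s.1.orderEmbOfFin s.2 t)

lemma Orthonormal.orthonormal_wedgeBasisVec (he : Orthonormal ℝ e) :
    Orthonormal ℝ (wedgeBasisVec (k := k) e) := by
  classical
  rw [orthonormal_iff_ite]
  intro s t
  simp only [wedgeBasisVec, inner_simpleWedge, orthonormal_iff_ite.mp he]
  split_ifs with hst
  · subst hst
    simp only [(s.1.orderEmbOfFin s.2).injective.eq_iff]
    exact det_one
  · obtain ⟨x, hxs, hxt⟩ :=
      exists_mem_notMem_of_ne_of_card_eq (Subtype.coe_ne_coe.mpr hst) (s.2.trans t.2.symm)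
    obtain ⟨i, rfl⟩ : x ∈ Set.range (s.1.orderEmbOfFin s.2) := by
      rwa [range_orderEmbOfFin]
    refine det_eq_zero_of_row_eq_zero i fun j => ?_
    simp only [of_apply, ite_eq_right_iff, one_ne_zero, imp_false]
    exact fun h => hxt (h ▸ orderEmbOfFin_mem t.1 t.2 j)

lemma Orthonormal.inner_eq_sum_inner_wedgeBasisVec_mul (he : Orthonormal ℝ e) (x y : ExtPow d k) :
    ⟪x, y⟫ = ∑ s, ⟪wedgeBasisVec e s, x⟫ * ⟪wedgeBasisVec e s, y⟫ := by
  have ho := he.orthonormal_wedgeBasisVec (k := k)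
  have hspan := ho.linearIndependent.span_eq_top_of_card_eq_finrank' (finrank_euclideanSpace).symm
  rw [← (OrthonormalBasis.mk ho hspan.ge).sum_inner_mul_inner x y]
  simp [real_inner_comm x]

end SimpleWedge

section OrthonormalFrames

variable {𝕜 E ι : Type*} [RCLike 𝕜] [NormedAddCommGroup E] [InnerProductSpace 𝕜 E]

instance : MulAction (E ≃ₗᵢ[𝕜] E) {u : ι → E // Orthonormal 𝕜 u} where
  smul ρ u := ⟨ρ ∘ u.1, u.2.comp_linearIsometryEquiv ρ⟩
  one_smul _ := rfl
  mul_smul _ _ _ := rfl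

@[simp]
lemma coe_linearIsometryEquiv_smul (ρ : E ≃ₗᵢ[𝕜] E) (u : {u : ι → E // Orthonormal 𝕜 u}) :
    (ρ • u).1 = ρ ∘ u.1 := rfl

instance : ContinuousConstSMul (E ≃ₗᵢ[𝕜] E) {u : ι → E // Orthonormal 𝕜 u} :=
  ⟨fun ρ => (continuous_pi fun i =>
    ρ.continuous.comp ((continuous_apply i).comp continuous_subtype_val)).subtype_mk _⟩

lemma Orthonormal.exists_orthonormalBasis_sumInl [Fintype ι] [FiniteDimensional 𝕜 E] {u : ι → E}
    (hu : Orthonormal 𝕜 u) :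
    ∃ b : OrthonormalBasis (ι ⊕ Fin (Module.finrank 𝕜 E - Fintype.card ι)) 𝕜 E,
      ∀ i, b (.inl i) = u i := by
  have hcard : Module.finrank 𝕜 E =
      Fintype.card (ι ⊕ Fin (Module.finrank 𝕜 E - Fintype.card ι)) := by
    have := hu.linearIndependent.fintype_card_le_finrank
    simp only [Fintype.card_sum, Fintype.card_fin]
    omega
  have hrestr : Orthonormal 𝕜 ((Set.range (Sum.inl : ι → ι ⊕ Fin (Module.finrank 𝕜 E -
      Fintype.card ι))).domRestrict (Sum.elim u 0)) := by
    classical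
    rw [orthonormal_iff_ite]
    rintro ⟨_, i, rfl⟩ ⟨_, j, rfl⟩
    simp [orthonormal_iff_ite.mp hu, Subtype.ext_iff]
  obtain ⟨b, hb⟩ := hrestr.exists_orthonormalBasis_extension_of_card_eq hcard
  exact ⟨b, fun i => hb _ ⟨i, rfl⟩⟩

instance [Fintype ι] [FiniteDimensional 𝕜 E] :
    MulAction.IsPretransitive (E ≃ₗᵢ[𝕜] E) {u : ι → E // Orthonormal 𝕜 u} := by
  refine ⟨fun u v => ?_⟩
  obtain ⟨bu, hbu⟩ := u.2.exists_orthonormalBasis_sumInl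
  obtain ⟨bv, hbv⟩ := v.2.exists_orthonormalBasis_sumInl
  exact ⟨bu.equiv bv (.refl _), Subtype.ext <| funext fun i => by
    simp [← hbu, ← hbv]⟩

lemma isCompact_setOf_orthonormal [Finite ι] [FiniteDimensional 𝕜 E] :
    IsCompact {u : ι → E | Orthonormal 𝕜 u} := by
  classical
  have := FiniteDimensional.proper_rclike 𝕜 E
  refine (isCompact_univ_pi fun _ => isCompact_sphere (0 : E) 1).of_isClosed_subset ?_
    fun u hu i _ => by simpa using hu.1 i
  simp only [orthonormal_iff_ite, Set.ofPred_forall]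
  exact isClosed_iInter fun i => isClosed_iInter fun j =>
    isClosed_eq ((continuous_apply i).inner (continuous_apply j)) continuous_const

instance [Finite ι] [FiniteDimensional 𝕜 E] : CompactSpace {u : ι → E // Orthonormal 𝕜 u} :=
  isCompact_iff_compactSpace.mp isCompact_setOf_orthonormal

lemma Orthonormal.reflection_orthogonal_singleton_apply [DecidableEq ι] {e : ι → E}
    (he : Orthonormal 𝕜 e) (i j : ι) :
    (𝕜 ∙ e j)ᗮ.reflection (e i) = (if i = j then -1 else 1 : 𝕜) • e i := by
  split_ifs with hij
  · rw [hij, Submodule.reflection_orthogonalComplement_singleton_eq_neg, neg_one_smul]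
  · rw [one_smul, Submodule.reflection_mem_subspace_eq_self
      (Submodule.mem_orthogonal_singleton_iff_inner_right.mpr (he.2 (Ne.symm hij)))]

end OrthonormalFrames

section SquareSpan

variable {X ι : Type*}

def sqSpan (a : ι → X → ℝ) : Submodule ℝ (X → ℝ) :=
  Submodule.span ℝ (Set.range fun s => a s ^ 2)

lemma continuous_of_mem_sqSpan [TopologicalSpace X] {a : ι → X → ℝ} (ha : ∀ s, Continuous (a s))
    {g : X → ℝ} (hg : g ∈ sqSpan a) : Continuous g := by
  induction hg using Submodule.span_induction with
  | mem f hf => obtain ⟨s, rfl⟩ := hf; exact (ha s).pow 2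
  | zero => exact continuous_const
  | add f g _ _ hf hg => exact hf.add hg
  | smul r f _ hf => exact hf.const_smul r

lemma comp_eq_of_mem_sqSpan {a : ι → X → ℝ} {σ : X → X} (hσ : ∀ s x, a s (σ x) ^ 2 = a s x ^ 2)
    {g : X → ℝ} (hg : g ∈ sqSpan a) : g ∘ σ = g := by
  induction hg using Submodule.span_induction with
  | mem f hf => obtain ⟨s, rfl⟩ := hf; exact funext (hσ s)
  | zero => rfl
  | add f g _ _ hf hg => rw [Pi.add_comp, hf, hg]
  | smul r f _ hf => rw [Pi.smul_comp, hf]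

variable [TopologicalSpace X] [CompactSpace X] [MeasurableSpace X] [OpensMeasurableSpace X]
  {μ : Measure X} [IsFiniteMeasure μ] {a : ι → X → ℝ}

lemma Continuous.integrable_of_compactSpace {f : X → ℝ} (hf : Continuous f) : Integrable f μ :=
  hf.integrable_of_hasCompactSupport (HasCompactSupport.of_compactSpace f)

lemma integral_mul_eq_zero_of_mem_sqSpan (ha : ∀ s, Continuous (a s)) {f h : X → ℝ}
    (hf : Continuous f) (hf0 : ∀ s, ∫ x, f x * a s x ^ 2 ∂μ = 0) (hh : h ∈ sqSpan a) :
    ∫ x, f x * h x ∂μ = 0 := by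
  induction hh using Submodule.span_induction with
  | mem h hh => obtain ⟨s, rfl⟩ := hh; exact hf0 s
  | zero => simp
  | add g h hg hh ihg ihh =>
    simp only [Pi.add_apply, mul_add]
    rw [integral_add (f := fun x => f x * g x) (g := fun x => f x * h x)
      (hf.mul (continuous_of_mem_sqSpan ha hg)).integrable_of_compactSpace
      (hf.mul (continuous_of_mem_sqSpan ha hh)).integrable_of_compactSpace, ihg, ihh, add_zero]
  | smul r h _ ih =>
    simp only [Pi.smul_apply, smul_eq_mul, mul_left_comm (f _), integral_const_mul, ih, mul_zero]

end SquareSpan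

section SquareKernel

variable {X ι : Type*} [Fintype ι]

instance (a : ι → X → ℝ) : FiniteDimensional ℝ (sqSpan a) :=
  FiniteDimensional.span_of_finite ℝ (Set.finite_range _)

variable [MeasurableSpace X]

noncomputable def sqKernelOp (μ : Measure X) (a : ι → X → ℝ) (g : X → ℝ) : X → ℝ :=
  fun x' => ∫ x, g x * (∑ s, a s x * a s x') ^ 2 ∂μ

lemma sqKernelOp_smul (μ : Measure X) (a : ι → X → ℝ) (r : ℝ) (g : X → ℝ) :
    sqKernelOp μ a (r • g) = r • sqKernelOp μ a g := by
  funext x'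
  simp only [sqKernelOp, Pi.smul_apply, smul_eq_mul, mul_assoc, integral_const_mul]

variable [TopologicalSpace X] [CompactSpace X] [OpensMeasurableSpace X]
  {μ : Measure X} [IsFiniteMeasure μ] {a : ι → X → ℝ}

lemma sqKernelOp_add (ha : ∀ s, Continuous (a s)) {f g : X → ℝ} (hf : Continuous f)
    (hg : Continuous g) : sqKernelOp μ a (f + g) = sqKernelOp μ a f + sqKernelOp μ a g := by
  funext x'
  have hK : Continuous fun x => (∑ s, a s x * a s x') ^ 2 := by fun_prop
  simp only [sqKernelOp, Pi.add_apply, add_mul]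
  exact integral_add (hf.mul hK).integrable_of_compactSpace (hg.mul hK).integrable_of_compactSpace

variable (μ a) in
/-- This makes `sqKernelOp μ a` diagonal in the functions `a s ^ 2`, see `sqKernelOp_eq_sum`. -/
def SqKernelDiagonal : Prop :=
  ∀ g ∈ sqSpan a, ∀ s t, s ≠ t → ∫ x, g x * (a s x * a t x) ∂μ = 0

lemma sqKernelOp_eq_sum (ha : ∀ s, Continuous (a s)) (hdiag : SqKernelDiagonal μ a)
    {g : X → ℝ} (hg : g ∈ sqSpan a) :
    sqKernelOp μ a g = ∑ s, (∫ x, g x * a s x ^ 2 ∂μ) • a s ^ 2 := by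
  funext x'
  have hint : ∀ s t, Integrable (fun x => g x * (a s x * a t x)) μ := fun s t =>
    ((continuous_of_mem_sqSpan ha hg).mul ((ha s).mul (ha t))).integrable_of_compactSpace
  calc sqKernelOp μ a g x'
      = ∫ x, ∑ s, ∑ t, g x * (a s x * a t x) * (a s x' * a t x') ∂μ := by
        refine integral_congr_ae (Filter.Eventually.of_forall fun x => ?_)
        dsimp only
        rw [sq, Finset.sum_mul_sum, Finset.mul_sum]
        refine Finset.sum_congr rfl fun s _ => ?_
        rw [Finset.mul_sum]
        exact Finset.sum_congr rfl fun t _ => by ring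
    _ = ∑ s, ∑ t, (∫ x, g x * (a s x * a t x) ∂μ) * (a s x' * a t x') := by
        rw [integral_finsetSum _ fun s _ => integrable_finsetSum _ fun t _ =>
          (hint s t).mul_const _]
        refine Finset.sum_congr rfl fun s _ => ?_
        rw [integral_finsetSum _ fun t _ => (hint s t).mul_const _]
        simp only [integral_mul_const]
    _ = ∑ s, (∫ x, g x * a s x ^ 2 ∂μ) * a s x' ^ 2 := by
        refine Finset.sum_congr rfl fun s _ => ?_
        rw [Finset.sum_eq_single s (fun t _ hts => by rw [hdiag g hg s t hts.symm, zero_mul])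
          (by simp)]
        simp only [sq]
    _ = (∑ s, (∫ x, g x * a s x ^ 2 ∂μ) • a s ^ 2) x' := by simp

lemma sqKernelOp_mem_sqSpan (ha : ∀ s, Continuous (a s)) (hdiag : SqKernelDiagonal μ a)
    {g : X → ℝ} (hg : g ∈ sqSpan a) : sqKernelOp μ a g ∈ sqSpan a := by
  rw [sqKernelOp_eq_sum ha hdiag hg]
  exact Submodule.sum_mem _ fun s _ => Submodule.smul_mem _ _ (Submodule.subset_span ⟨s, rfl⟩)

lemma integral_sqKernelOp_mul (ha : ∀ s, Continuous (a s)) (hdiag : SqKernelDiagonal μ a)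
    {f g : X → ℝ} (hf : f ∈ sqSpan a) (hg : Continuous g) :
    ∫ x, sqKernelOp μ a f x * g x ∂μ =
      ∑ s, (∫ x, f x * a s x ^ 2 ∂μ) * ∫ x, g x * a s x ^ 2 ∂μ := by
  rw [sqKernelOp_eq_sum ha hdiag hf]
  simp only [Finset.sum_apply, Pi.smul_apply, Pi.pow_apply, smul_eq_mul, Finset.sum_mul,
    mul_assoc]
  rw [integral_finsetSum _ fun s _ =>
    (Continuous.integrable_of_compactSpace (f := fun x => a s x ^ 2 * g x)
      (((ha s).pow 2).mul hg)).const_mul _]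
  simp only [integral_const_mul, mul_comm (a _ _ ^ 2)]

lemma eq_zero_of_sqKernelOp_eq_zero [μ.IsOpenPosMeasure] (ha : ∀ s, Continuous (a s))
    (hdiag : SqKernelDiagonal μ a) {g : X → ℝ} (hg : g ∈ sqSpan a) (h0 : sqKernelOp μ a g = 0) :
    g = 0 := by
  have hgc := continuous_of_mem_sqSpan ha hg
  have hcoef : ∀ s, ∫ x, g x * a s x ^ 2 ∂μ = 0 := by
    have hsum := integral_sqKernelOp_mul ha hdiag hg hgc
    simp only [h0, Pi.zero_apply, zero_mul, integral_zero] at hsum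
    intro s
    exact mul_self_eq_zero.mp <| (Finset.sum_eq_zero_iff_of_nonneg
      fun s _ => mul_self_nonneg _).mp hsum.symm s (Finset.mem_univ s)
  have hsq : ∫ x, g x * g x ∂μ = 0 := integral_mul_eq_zero_of_mem_sqSpan ha hgc hcoef hg
  have hae : g =ᵐ[μ] 0 := by
    filter_upwards [(integral_eq_zero_iff_of_nonneg (fun x => mul_self_nonneg (g x))
      (hgc.mul hgc).integrable_of_compactSpace).mp hsq] with x hx
    exact mul_self_eq_zero.mp hx
  exact (hgc.ae_eq_iff_eq μ continuous_const).mp hae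

variable (ha : ∀ s, Continuous (a s)) (hdiag : SqKernelDiagonal μ a)

noncomputable def sqKernelLinearMap : sqSpan a →ₗ[ℝ] sqSpan a where
  toFun g := ⟨sqKernelOp μ a g, sqKernelOp_mem_sqSpan ha hdiag g.2⟩
  map_add' f g := Subtype.ext <|
    sqKernelOp_add ha (continuous_of_mem_sqSpan ha f.2) (continuous_of_mem_sqSpan ha g.2)
  map_smul' r g := Subtype.ext <| sqKernelOp_smul μ a r g

lemma sqKernelLinearMap_bijective [μ.IsOpenPosMeasure] :
    Function.Bijective (sqKernelLinearMap ha hdiag) := by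
  have hinj : Function.Injective (sqKernelLinearMap ha hdiag) := by
    rw [← LinearMap.ker_eq_bot, LinearMap.ker_eq_bot']
    intro g hg
    exact Subtype.ext <| eq_zero_of_sqKernelOp_eq_zero ha hdiag g.2 (congrArg Subtype.val hg)
  exact ⟨hinj, LinearMap.injective_iff_surjective.mp hinj⟩

end SquareKernel

lemma isOpenPosMeasure_of_smulInvariant (G : Type*) {X : Type*} [Group G] [MulAction G X]
    [TopologicalSpace X] [CompactSpace X] [ContinuousConstSMul G X] [MulAction.IsMinimal G X]
    [MeasurableSpace X] (μ : Measure X) [NeZero μ] [SMulInvariantMeasure G X μ] :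
    μ.IsOpenPosMeasure :=
  ⟨fun _ hU hne => (measure_isOpen_pos_of_smulInvariant_of_compact_ne_zero G isCompact_univ
    (NeZero.ne (μ Set.univ)) hU hne).ne'⟩

section Grassmannian

variable {d k : ℕ} {e : Fin d → EuclideanSpace ℝ (Fin d)}

instance : BorelSpace (Stiefel d k) := Subtype.borelSpace _

lemma continuous_simpleWedge :
    Continuous (simpleWedge : (Fin k → EuclideanSpace ℝ (Fin d)) → ExtPow d k) := by
  unfold simpleWedge
  fun_prop

/-- `U ↦ ⟨E_I, U⟩`. -/
noncomputable def wedgeCoord (e : Fin d → EuclideanSpace ℝ (Fin d))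
    (s : {s : Finset (Fin d) // s.card = k}) : Stiefel d k → ℝ :=
  fun u => ⟪wedgeBasisVec e s, simpleWedge u.1⟫

lemma continuous_wedgeCoord (s : {s : Finset (Fin d) // s.card = k}) :
    Continuous (wedgeCoord e s) :=
  continuous_const.inner (continuous_simpleWedge.comp continuous_subtype_val)

lemma wedgeCoord_reflection_smul (he : Orthonormal ℝ e) (j : Fin d)
    (s : {s : Finset (Fin d) // s.card = k}) (u : Stiefel d k) :
    wedgeCoord e s ((ℝ ∙ e j)ᗮ.reflection • u) =
      (if j ∈ s.1 then -1 else 1) * wedgeCoord e s u := by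
  set ρ := (ℝ ∙ e j)ᗮ.reflection
  set b : Fin k → EuclideanSpace ℝ (Fin d) := fun t => e (s.1.orderEmbOfFin s.2 t)
  have hρb : ρ ∘ b = fun t => (if s.1.orderEmbOfFin s.2 t = j then -1 else 1 : ℝ) • b t :=
    funext fun t => he.reflection_orthogonal_singleton_apply _ j
  have hsign : ∏ t, (if s.1.orderEmbOfFin s.2 t = j then -1 else 1 : ℝ) =
      if j ∈ s.1 then -1 else 1 := by
    rw [← prod_ite_eq' s.1 j fun _ => (-1 : ℝ)]
    conv_rhs => rw [← map_orderEmbOfFin_univ s.1 s.2, prod_map]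
    rfl
  calc wedgeCoord e s (ρ • u)
      = ⟪simpleWedge (ρ ∘ (ρ ∘ b)), simpleWedge (ρ ∘ u.1)⟫ := by
        simp [wedgeCoord, wedgeBasisVec, ρ, Function.comp_def, Submodule.reflection_reflection, b]
    _ = ⟪simpleWedge (ρ ∘ b), simpleWedge u.1⟫ := inner_simpleWedge_comp_linearIsometryEquiv ..
    _ = _ := by rw [hρb, simpleWedge_smul, real_inner_smul_left, hsign]; rfl

lemma sqKernelDiagonal_wedgeCoord (he : Orthonormal ℝ e) (μ : Measure (Stiefel d k))
    [SMulInvariantMeasure (EuclideanSpace ℝ (Fin d) ≃ₗᵢ[ℝ] EuclideanSpace ℝ (Fin d))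
      (Stiefel d k) μ] :
    SqKernelDiagonal μ (wedgeCoord e) := by
  intro g hg s t hst
  obtain ⟨j, hjs, hjt⟩ :=
    exists_mem_notMem_of_ne_of_card_eq (Subtype.coe_ne_coe.mpr hst) (s.2.trans t.2.symm)
  set ρ := (ℝ ∙ e j)ᗮ.reflection
  have hg_inv : ∀ u, g (ρ • u) = g u := congrFun <| comp_eq_of_mem_sqSpan (fun r u => by
    rw [wedgeCoord_reflection_smul he]
    split_ifs <;> ring) hg
  have hflip : ∀ u, g (ρ • u) * (wedgeCoord e s (ρ • u) * wedgeCoord e t (ρ • u)) =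
      -(g u * (wedgeCoord e s u * wedgeCoord e t u)) := fun u => by
    rw [hg_inv, wedgeCoord_reflection_smul he, wedgeCoord_reflection_smul he,
      if_pos hjs, if_neg hjt]
    ring
  have h := integral_smul_eq_self (μ := μ)
    (fun u => g u * (wedgeCoord e s u * wedgeCoord e t u)) (g := ρ)
  simp only [hflip, integral_neg] at h
  linarith

lemma span_sq_inner_simpleWedge_eq_sqSpan :
    Submodule.span ℝ {f : Stiefel d k → ℝ | ∃ (I : Finset (Fin d)) (hI : I.card = k),
      f = fun u => ⟪simpleWedge (fun t => e (I.orderIsoOfFin hI t)), simpleWedge u.1⟫ ^ 2} =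
      sqSpan (wedgeCoord e) := by
  congr 1
  ext f
  constructor
  · rintro ⟨I, hI, rfl⟩
    exact ⟨⟨I, hI⟩, rfl⟩
  · rintro ⟨s, rfl⟩
    exact ⟨s.1, s.2, rfl⟩

lemma Orthonormal.sqKernelOp_wedgeCoord (he : Orthonormal ℝ e) (μ : Measure (Stiefel d k)) :
    sqKernelOp μ (wedgeCoord e) =
      fun g u' => ∫ u, g u * ⟪simpleWedge u.1, simpleWedge u'.1⟫ ^ 2 ∂μ := by
  funext g u'
  refine integral_congr_ae (ae_of_all _ fun u => ?_)
  dsimp only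
  rw [he.inner_eq_sum_inner_wedgeBasisVec_mul]
  rfl

end Grassmannian

theorem operator_T_selfadjoint_bijective_general (d k : ℕ)
    (μ : Measure (Stiefel d k)) (hμ : IsProbabilityMeasure μ)
    (hinv : ∀ ρ : EuclideanSpace ℝ (Fin d) ≃ₗᵢ[ℝ] EuclideanSpace ℝ (Fin d),
      ∀ f : Stiefel d k → Stiefel d k,
        (∀ u t, (f u).1 t = ρ (u.1 t)) → Measure.map f μ = μ)
    (e : Fin d → EuclideanSpace ℝ (Fin d)) (he : Orthonormal ℝ e)
    (L : Submodule ℝ (Stiefel d k → ℝ))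
    (hL : L = Submodule.span ℝ {f : Stiefel d k → ℝ |
      ∃ (I : Finset (Fin d)) (hI : I.card = k),
        f = fun u => ⟪simpleWedge (fun t => e (I.orderIsoOfFin hI t)), simpleWedge u.1⟫ ^ 2})
    (T : (Stiefel d k → ℝ) → (Stiefel d k → ℝ))
    (hT : T = fun g u' => ∫ u : Stiefel d k,
      g u * ⟪simpleWedge u.1, simpleWedge u'.1⟫ ^ 2 ∂μ) :
    (∀ g ∈ L, T g ∈ L) ∧
    (∀ f ∈ L, ∀ g ∈ L, T (f + g) = T f + T g) ∧
    (∀ r : ℝ, ∀ g ∈ L, T (r • g) = r • T g) ∧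
    (∀ f ∈ L, ∀ g ∈ L,
      (∫ u : Stiefel d k, T f u * g u ∂μ) = ∫ u : Stiefel d k, f u * T g u ∂μ) ∧
    (∀ h ∈ L, ∃ g ∈ L, T g = h) ∧
    (∀ g₁ ∈ L, ∀ g₂ ∈ L, T g₁ = T g₂ → g₁ = g₂) ∧
    (∀ (α : ℝ), ∀ g ∈ L, g ≠ 0 → T g = α • g → α ≠ 0) := by
  let G := EuclideanSpace ℝ (Fin d) ≃ₗᵢ[ℝ] EuclideanSpace ℝ (Fin d)
  have : SMulInvariantMeasure G (Stiefel d k) μ :=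
    ((smulInvariantMeasure_tfae G μ).out 0 5).mpr fun ρ => hinv ρ _ fun _ _ => rfl
  have := isOpenPosMeasure_of_smulInvariant G μ
  have ha := continuous_wedgeCoord (e := e) (k := k)
  have hdiag := sqKernelDiagonal_wedgeCoord he μ
  have hbij := sqKernelLinearMap_bijective ha hdiag
  have hcont := fun g (hg : g ∈ sqSpan (wedgeCoord e)) => continuous_of_mem_sqSpan ha hg
  rw [span_sq_inner_simpleWedge_eq_sqSpan] at hL
  rw [← he.sqKernelOp_wedgeCoord] at hT
  subst hL hT
  refine ⟨fun g hg => sqKernelOp_mem_sqSpan ha hdiag hg,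
    fun f hf g hg => sqKernelOp_add ha (hcont f hf) (hcont g hg),
    fun r g _ => sqKernelOp_smul μ _ r g, fun f hf g hg => ?_, fun h hh => ?_,
    fun g₁ hg₁ g₂ hg₂ h => ?_, fun α g hg hg0 h hα => ?_⟩
  · simp_rw [integral_sqKernelOp_mul ha hdiag hf (hcont g hg), mul_comm (f _),
      integral_sqKernelOp_mul ha hdiag hg (hcont f hf), mul_comm]
  · obtain ⟨g, hg⟩ := hbij.2 ⟨h, hh⟩
    exact ⟨g, g.2, congrArg Subtype.val hg⟩
  · exact congrArg Subtype.val (hbij.1 (a₁ := ⟨g₁, hg₁⟩) (a₂ := ⟨g₂, hg₂⟩) (Subtype.ext h))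
  · subst hα
    exact hg0 (eq_zero_of_sqKernelOp_eq_zero ha hdiag hg (by rw [h, zero_smul]))

/-- Let `ℒ` be the span of the functions `V ↦ ⟨E_I, V⟩²` on `G(d,k)` (`I` a `k`-subset of
a fixed orthonormal basis `e`), let `ν` be the invariant probability measure on `G(d,k)`,
and let `(Tg)(U') = ∫ g(U) ⟨U,U'⟩² ν(dU)`.  Then `T` maps `ℒ` into `ℒ`, is linear and
self-adjoint w.r.t. `(f,g) = ∫ fg dν`, is bijective on `ℒ`, and all its eigenvalues are
nonzero. -/
theorem operator_T_selfadjoint_bijective (d k : ℕ) (hk : k ≤ d)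
    (μ : Measure (Stiefel d k)) (hμ : IsProbabilityMeasure μ)
    (hinv : ∀ ρ : EuclideanSpace ℝ (Fin d) ≃ₗᵢ[ℝ] EuclideanSpace ℝ (Fin d),
      ∀ f : Stiefel d k → Stiefel d k,
        (∀ u t, (f u).1 t = ρ (u.1 t)) → Measure.map f μ = μ)
    (e : Fin d → EuclideanSpace ℝ (Fin d)) (he : Orthonormal ℝ e)
    (L : Submodule ℝ (Stiefel d k → ℝ))
    (hL : L = Submodule.span ℝ {f : Stiefel d k → ℝ |
      ∃ (I : Finset (Fin d)) (hI : I.card = k),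
        f = fun u => ⟪simpleWedge (fun t => e (I.orderIsoOfFin hI t)), simpleWedge u.1⟫ ^ 2})
    (T : (Stiefel d k → ℝ) → (Stiefel d k → ℝ))
    (hT : T = fun g u' => ∫ u : Stiefel d k,
      g u * ⟪simpleWedge u.1, simpleWedge u'.1⟫ ^ 2 ∂μ) :
    (∀ g ∈ L, T g ∈ L) ∧
    (∀ f ∈ L, ∀ g ∈ L, T (f + g) = T f + T g) ∧
    (∀ r : ℝ, ∀ g ∈ L, T (r • g) = r • T g) ∧
    (∀ f ∈ L, ∀ g ∈ L,
      (∫ u : Stiefel d k, T f u * g u ∂μ) = ∫ u : Stiefel d k, f u * T g u ∂μ) ∧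
    (∀ h ∈ L, ∃ g ∈ L, T g = h) ∧
    (∀ g₁ ∈ L, ∀ g₂ ∈ L, T g₁ = T g₂ → g₁ = g₂) ∧
    (∀ (α : ℝ), ∀ g ∈ L, g ≠ 0 → T g = α • g → α ≠ 0) :=
  operator_T_selfadjoint_bijective_general d k μ hμ hinv e he L hL T hT
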